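/- For H ∈ (1/2, 1), a > 0, σ > 0, the function Z(t) = (σ² H(2H−1)/(2a)) ∫₀^t τ^{2H−2}(e^{−aτ} − e^{aτ−2at}) dτ is nonnegative for all t ≥ 0 and converges as t → ∞ to the limit (σ²/2) a^{−2H} H(2H−1) Γ(2H−1). -/

import Mathlib

open Real MeasureTheory Filter Topology

/-!
For `τ ∈ [0, t]` the reflected weight `exp (a τ - 2 a t)` is at most `exp (-a t) ≤ exp (-a τ)`,
so the integrand is nonnegative. As `t → ∞` the first part of the integral tends to the Gamma
integral `∫₀^∞ τ^s e^{-aτ} dτ = a^{-(s+1)} Γ(s+1)`, while the reflected part is bounded by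
`e^{-at} t^{s+1} / (s+1) → 0`.
-/

section ReflectedExpKernel

variable {s a t : ℝ}

lemma exp_reflect_le_exp_neg_mul (ha : 0 ≤ a) {τ : ℝ} (hτ : τ ≤ t) :
    exp (a * τ - 2 * a * t) ≤ exp (-a * t) :=
  exp_le_exp.mpr (by nlinarith)

lemma integral_rpow_mul_exp_sub_exp_reflect_nonneg (ha : 0 ≤ a) (ht : 0 ≤ t) :
    0 ≤ ∫ τ in (0 : ℝ)..t, τ ^ s * (exp (-a * τ) - exp (a * τ - 2 * a * t)) := by
  refine intervalIntegral.integral_nonneg ht fun τ hτ => mul_nonneg (rpow_nonneg hτ.1 s) ?_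
  have hneg : exp (-a * t) ≤ exp (-a * τ) := exp_le_exp.mpr (by nlinarith [hτ.2])
  linarith [exp_reflect_le_exp_neg_mul ha hτ.2]

lemma intervalIntegrable_rpow_mul (hs : -1 < s) {f : ℝ → ℝ} (hf : Continuous f) (t : ℝ) :
    IntervalIntegrable (fun τ => τ ^ s * f τ) volume 0 t :=
  (intervalIntegral.intervalIntegrable_rpow' hs).mul_continuousOn hf.continuousOn

lemma tendsto_integral_rpow_mul_exp_neg_mul (hs : -1 < s) (ha : 0 < a) :
    Tendsto (fun t => ∫ τ in (0 : ℝ)..t, τ ^ s * exp (-a * τ)) atTop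
      (𝓝 (a ^ (-(s + 1)) * Gamma (s + 1))) := by
  have hint : IntegrableOn (fun τ : ℝ => τ ^ s * exp (-a * τ)) (Set.Ioi 0) := by
    simpa only [rpow_one] using integrableOn_rpow_mul_exp_neg_mul_rpow hs zero_lt_one ha
  have hval : ∫ τ in Set.Ioi (0 : ℝ), τ ^ s * exp (-a * τ) = a ^ (-(s + 1)) * Gamma (s + 1) := by
    have h := integral_rpow_mul_exp_neg_mul_Ioi (by linarith : 0 < s + 1) ha
    rw [add_sub_cancel_right, one_div, inv_rpow ha.le, ← rpow_neg ha.le] at h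
    simpa only [neg_mul] using h
  simpa only [hval, id] using intervalIntegral_tendsto_integral_Ioi 0 hint tendsto_id

lemma integral_rpow_mul_exp_reflect_le (hs : -1 < s) (ha : 0 ≤ a) (ht : 0 ≤ t) :
    ∫ τ in (0 : ℝ)..t, τ ^ s * exp (a * τ - 2 * a * t) ≤ t ^ (s + 1) * exp (-a * t) / (s + 1) :=
  calc ∫ τ in (0 : ℝ)..t, τ ^ s * exp (a * τ - 2 * a * t)
      ≤ ∫ τ in (0 : ℝ)..t, τ ^ s * exp (-a * t) := by
        refine intervalIntegral.integral_mono_on ht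
          (intervalIntegrable_rpow_mul hs (by fun_prop) t)
          (intervalIntegrable_rpow_mul hs continuous_const t) fun τ hτ => ?_
        exact mul_le_mul_of_nonneg_left (exp_reflect_le_exp_neg_mul ha hτ.2) (rpow_nonneg hτ.1 s)
    _ = t ^ (s + 1) * exp (-a * t) / (s + 1) := by
        rw [intervalIntegral.integral_mul_const, integral_rpow (Or.inl hs),
          zero_rpow (by linarith), sub_zero, div_mul_eq_mul_div]

lemma tendsto_integral_rpow_mul_exp_reflect_zero (hs : -1 < s) (ha : 0 < a) :
    Tendsto (fun t => ∫ τ in (0 : ℝ)..t, τ ^ s * exp (a * τ - 2 * a * t)) atTop (𝓝 0) := by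
  have hbound : Tendsto (fun t : ℝ => t ^ (s + 1) * exp (-a * t) / (s + 1)) atTop (𝓝 0) := by
    simpa only [zero_div] using
      (tendsto_rpow_mul_exp_neg_mul_atTop_nhds_zero (s + 1) a ha).div_const (s + 1)
  refine squeeze_zero' ?_ ?_ hbound <;> filter_upwards [eventually_ge_atTop 0] with t ht
  · exact intervalIntegral.integral_nonneg ht fun τ hτ =>
      mul_nonneg (rpow_nonneg hτ.1 s) (exp_nonneg _)
  · exact integral_rpow_mul_exp_reflect_le hs ha.le ht

theorem tendsto_integral_rpow_mul_exp_sub_exp_reflect (hs : -1 < s) (ha : 0 < a) :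
    Tendsto (fun t => ∫ τ in (0 : ℝ)..t, τ ^ s * (exp (-a * τ) - exp (a * τ - 2 * a * t)))
      atTop (𝓝 (a ^ (-(s + 1)) * Gamma (s + 1))) := by
  have hlim := (tendsto_integral_rpow_mul_exp_neg_mul hs ha).sub
    (tendsto_integral_rpow_mul_exp_reflect_zero hs ha)
  rw [sub_zero] at hlim
  refine hlim.congr fun t => ?_
  simp only [mul_sub]
  exact (intervalIntegral.integral_sub (intervalIntegrable_rpow_mul hs (by fun_prop) t)
    (intervalIntegrable_rpow_mul hs (by fun_prop) t)).symm

end ReflectedExpKernel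

theorem fou_variance_nonneg_and_limit_general
    (H a σ : ℝ) (hH : H ∈ Set.Ioo (1 / 2 : ℝ) 1) (ha : 0 < a)
    (Z : ℝ → ℝ)
    (hZ : ∀ t, Z t = σ ^ 2 * H * (2 * H - 1) / (2 * a) *
      ∫ τ in (0:ℝ)..t,
        τ ^ (2 * H - 2) * (Real.exp (-a * τ) - Real.exp (a * τ - 2 * a * t))) :
    (∀ t, 0 ≤ t → 0 ≤ Z t) ∧
    Tendsto Z atTop
      (𝓝 (σ ^ 2 / 2 * a ^ (-(2 * H)) * H * (2 * H - 1) * Real.Gamma (2 * H - 1))) := by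
  have hH₀ : 0 < H := by linarith [hH.1]
  have h2H : 0 < 2 * H - 1 := by linarith [hH.1]
  have hs : -1 < 2 * H - 2 := by linarith
  have hC : 0 ≤ σ ^ 2 * H * (2 * H - 1) / (2 * a) := by positivity
  refine ⟨fun t ht => (hZ t).symm ▸
    mul_nonneg hC (integral_rpow_mul_exp_sub_exp_reflect_nonneg ha.le ht), ?_⟩
  have hlim := (tendsto_integral_rpow_mul_exp_sub_exp_reflect hs ha).const_mul
    (σ ^ 2 * H * (2 * H - 1) / (2 * a))
  have hexp : a ^ (-(2 * H - 2 + 1)) = a * a ^ (-(2 * H)) := by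
    rw [show -(2 * H - 2 + 1) = 1 + -(2 * H) by ring, rpow_add ha, rpow_one]
  rw [hexp, show 2 * H - 2 + 1 = 2 * H - 1 by ring] at hlim
  convert hlim using 2
  · exact hZ _
  · field_simp

/-- The fractional OU variance function
`Z(t) = (σ² H(2H-1)/(2a)) ∫₀ᵗ τ^(2H-2)(e^(-aτ) - e^(aτ-2at)) dτ`
is nonnegative on `[0,∞)` and tends to `(σ²/2) a^(-2H) H(2H-1) Γ(2H-1)`
as `t → ∞`. -/
theorem fou_variance_nonneg_and_limit
    (H a σ : ℝ) (hH : H ∈ Set.Ioo (1 / 2 : ℝ) 1) (ha : 0 < a) (hσ : 0 < σ)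
    (Z : ℝ → ℝ)
    (hZ : ∀ t, Z t = σ ^ 2 * H * (2 * H - 1) / (2 * a) *
      ∫ τ in (0:ℝ)..t,
        τ ^ (2 * H - 2) * (Real.exp (-a * τ) - Real.exp (a * τ - 2 * a * t))) :
    (∀ t, 0 ≤ t → 0 ≤ Z t) ∧
    Tendsto Z atTop
      (𝓝 (σ ^ 2 / 2 * a ^ (-(2 * H)) * H * (2 * H - 1) * Real.Gamma (2 * H - 1))) :=
  fou_variance_nonneg_and_limit_general H a σ hH ha Z hZ
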